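/- Let ⟨ℛ, Q, C⟩ be an admissible triple in which ℛ is a Q-valued similarity relation (i.e., additionally transitive: ℛ(x,z) ⊒ ℛ(x,y) ⊓ ℛ(y,z) for all symbols x, y, z). Then for every λ ∈ D ∖ {⊥} and every set Π ⊆ Con_C of C-constraints, the constraint-based term proximity relation ≈_{λ,Π} is transitive on the set of terms: if t ≈_{λ,Π} s and s ≈_{λ,Π} r then t ≈_{λ,Π} r. -/

import Mathlib

/-- A qualification domain: a bounded lattice equipped with an attenuation operation. -/
structure QualificationDomain (D : Type*) [Lattice D] [BoundedOrder D] where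
  att : D → D → D
  att_assoc : ∀ d e f : D, att (att d e) f = att d (att e f)
  att_comm : ∀ d e : D, att d e = att e d
  att_mono : ∀ d d' e e' : D, d ≤ d' → e ≤ e' → att d e ≤ att d' e'
  att_top : ∀ d : D, att d ⊤ = d
  att_bot : ∀ d : D, att d ⊥ = ⊥
  att_le : ∀ d e : D, att d e ≤ e
  att_ne_bot : ∀ d e : D, d ≠ ⊥ → e ≠ ⊥ → att d e ≠ ⊥
  att_inf : ∀ d e₁ e₂ : D, att d (e₁ ⊓ e₂) = att d e₁ ⊓ att d e₂

/-- First-order terms over variables `V` and data constructors `CS`. -/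
inductive Trm (V : Type*) (CS : Type*) : Type _
  | var : V → Trm V CS
  | app : CS → List (Trm V CS) → Trm V CS

variable {V CS DP PP : Type*}

/-- Application of a substitution to a term. -/
def Trm.subst (θ : V → Trm V CS) : Trm V CS → Trm V CS
  | .var X => θ X
  | .app c ts => .app c (ts.attach.map fun t => t.1.subst θ)
decreasing_by
  have := List.sizeOf_lt_of_mem t.2
  simp only [Trm.app.sizeOf_spec]
  omega

/-- Application of a valuation (ground substitution) to a term; ground terms are
terms over the empty set of variables. -/
def Trm.applyVal (η : V → Trm Empty CS) : Trm V CS → Trm Empty CS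
  | .var X => η X
  | .app c ts => .app c (ts.attach.map fun t => t.1.applyVal η)
decreasing_by
  have := List.sizeOf_lt_of_mem t.2
  simp only [Trm.app.sizeOf_spec]
  omega

variable {D : Type*} [Lattice D] [BoundedOrder D]

/-- The extension of a proximity relation on symbols to a proximity relation on terms:
`ext R (var X) (var X) = ⊤`, `ext R t s = ⊥` if exactly one of `t`, `s` is a variable or
they are applications of different arities, and
`ext R (c(t₁,…,tₙ)) (c'(s₁,…,sₙ)) = R c c' ⊓ ext R t₁ s₁ ⊓ ⋯ ⊓ ext R tₙ sₙ`. -/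
def Trm.ext [DecidableEq V] (R : CS → CS → D) : Trm V CS → Trm V CS → D
  | .var X, .var Y => if X = Y then (⊤ : D) else ⊥
  | .var _, .app _ _ => ⊥
  | .app _ _, .var _ => ⊥
  | .app c ts, .app c' ss =>
      if ts.length = ss.length then
        R c c' ⊓ ((ts.zip ss).attach.map (fun p => Trm.ext R p.1.1 p.1.2)).foldr (· ⊓ ·) ⊤
      else ⊥
termination_by t _ => sizeOf t
decreasing_by
  have h1 : p.1.1 ∈ ts := (List.of_mem_zip p.2).1
  have := List.sizeOf_lt_of_mem h1
  simp only [Trm.app.sizeOf_spec]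
  omega

/-- Constraints over terms: primitive atoms, equations, conjunction and
existential quantification. -/
inductive Constr (V CS PP : Type*) : Type _
  | prim : PP → List (Trm V CS) → Constr V CS PP
  | eq : Trm V CS → Trm V CS → Constr V CS PP
  | and : Constr V CS PP → Constr V CS PP → Constr V CS PP
  | ex : V → Constr V CS PP → Constr V CS PP

/-- Satisfaction of a constraint by a valuation, relative to an interpretation `pI` of the
primitive predicates over ground terms.  An equation is true iff both sides evaluate to the
same ground term. -/
def Constr.sat [DecidableEq V] (pI : PP → List (Trm Empty CS) → Prop)
    (η : V → Trm Empty CS) : Constr V CS PP → Prop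
  | .prim p ts => pI p (ts.map (Trm.applyVal η))
  | .eq t s => t.applyVal η = s.applyVal η
  | .and c₁ c₂ => c₁.sat pI η ∧ c₂.sat pI η
  | .ex X c => ∃ u : Trm Empty CS, c.sat pI (Function.update η X u)

/-- The set of solutions of a set of constraints. -/
def Sol [DecidableEq V] (pI : PP → List (Trm Empty CS) → Prop)
    (Pi : Set (Constr V CS PP)) : Set (V → Trm Empty CS) :=
  {η | ∀ c ∈ Pi, c.sat pI η}

/-- Entailment `Π ⊨_C π` of a constraint by a set of constraints. -/
def Entails [DecidableEq V] (pI : PP → List (Trm Empty CS) → Prop)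
    (Pi : Set (Constr V CS PP)) (c : Constr V CS PP) : Prop :=
  ∀ η ∈ Sol pI Pi, c.sat pI η

/-- Semantic form of the entailment `Π' ⊨_C Πθ`: every solution of `Π'`, composed with the
substitution `θ`, is a solution of `Π`. -/
def EntailsSubst [DecidableEq V] (pI : PP → List (Trm Empty CS) → Prop)
    (Pi' : Set (Constr V CS PP)) (θ : V → Trm V CS) (Pi : Set (Constr V CS PP)) : Prop :=
  ∀ η ∈ Sol pI Pi', (fun X => (θ X).applyVal η) ∈ Sol pI Pi

/-- Constraint-based term proximity: `t ≈_{d,Π} s` iff there are terms `t̂`, `ŝ` with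
`Π ⊨_C t == t̂`, `Π ⊨_C s == ŝ` and `ext R t̂ ŝ ⊒ d`. -/
def TermClose [DecidableEq V] (R : CS → CS → D) (pI : PP → List (Trm Empty CS) → Prop)
    (d : D) (Pi : Set (Constr V CS PP)) (t s : Trm V CS) : Prop :=
  ∃ th sh : Trm V CS,
    Entails pI Pi (Constr.eq t th) ∧ Entails pI Pi (Constr.eq s sh) ∧ d ≤ Trm.ext R th sh

/-- A `Q`-valued proximity relation on the symbols (variables, data constructors, defined
predicates, primitive predicates): it is determined by its restrictions to data constructors
and to defined predicate symbols, since it behaves as the identity on variables and is `⊥`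
between symbols of different kinds (and on primitive predicates it is only nonbottom between
equal symbols). -/
structure ProximityRel (D : Type*) [Lattice D] [BoundedOrder D] {CS DP : Type*}
    (arC : CS → ℕ) (arD : DP → ℕ) where
  dc : CS → CS → D
  dp : DP → DP → D
  dc_refl : ∀ c, dc c c = ⊤
  dc_symm : ∀ c c', dc c c' = dc c' c
  dc_arity : ∀ c c', dc c c' ≠ ⊥ → arC c = arC c'
  dp_refl : ∀ r, dp r r = ⊤
  dp_symm : ∀ r r', dp r r' = dp r' r
  dp_arity : ∀ r r', dp r r' ≠ ⊥ → arD r = arD r'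

/-!
Proximity at a level `λ ≠ ⊥` forces two terms to have the same shape, with the same variables
in the same places. Given `t̂ ≈ ŝ`, `Π ⊨ ŝ == ŝ'` and `ŝ' ≈ r̂`, descend through `ŝ` and `ŝ'`
simultaneously: where one of them is a variable, the matching subterm of `t̂` (or `r̂`) is that
same variable and may be exchanged for the other side, as `Π` entails their equality; where both
are applications, any solution of `Π` forces equal constructors and componentwise entailed
equations. Transitivity of `ℛ` on constructors glues the levels at the root of each application.
When `Π` has no solution every equation is entailed and there is nothing to prove.
-/

open List

theorem List.le_foldr_inf_map_iff {α β : Type*} [SemilatticeInf β] [OrderTop β] {b : β}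
    {f : α → β} {l : List α} : b ≤ (l.map f).foldr (· ⊓ ·) ⊤ ↔ ∀ x ∈ l, b ≤ f x := by
  induction l with
  | nil => simp
  | cons x l ih => simp [ih]

theorem List.Forall₂.trans₃ {α β γ δ : Type*} {R₁ : α → β → Prop} {R₂ : β → γ → Prop}
    {R₃ : γ → δ → Prop} {S : α → δ → Prop} {as : List α} {ts : List β} {ss : List γ}
    {bs : List δ} (h₁ : Forall₂ R₁ as ts) (h₂ : Forall₂ R₂ ts ss) (h₃ : Forall₂ R₃ ss bs)
    (hS : ∀ t ∈ ts, ∀ a s b, R₁ a t → R₂ t s → R₃ s b → S a b) : Forall₂ S as bs := by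
  induction h₁ generalizing ss bs with
  | nil => cases h₂; cases h₃; exact .nil
  | cons h₁ _ ih =>
    obtain _ | ⟨h₂, h₂'⟩ := h₂
    obtain _ | ⟨h₃, h₃'⟩ := h₃
    exact .cons (hS _ mem_cons_self _ _ _ h₁ h₂ h₃)
      (ih h₂' h₃' fun t ht => hS t (mem_cons_of_mem _ ht))

section Terms

@[simp]
theorem Trm.applyVal_app (η : V → Trm Empty CS) (c : CS) (ts : List (Trm V CS)) :
    (Trm.app c ts).applyVal η = .app c (ts.map (Trm.applyVal η)) := by
  rw [Trm.applyVal]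
  simp

theorem Trm.applyVal_app_eq_applyVal_app_iff (η : V → Trm Empty CS) {c c' : CS}
    {ts ss : List (Trm V CS)} :
    (Trm.app c ts).applyVal η = (Trm.app c' ss).applyVal η ↔
      c = c' ∧ Forall₂ (fun t s => t.applyVal η = s.applyVal η) ts ss := by
  rw [Trm.applyVal_app, Trm.applyVal_app, Trm.app.injEq, ← forall₂_eq_eq_eq,
    forall₂_map_left_iff, forall₂_map_right_iff]

theorem Trm.sizeOf_lt_of_mem {c : CS} {t : Trm V CS} {ts : List (Trm V CS)} (h : t ∈ ts) :
    sizeOf t < sizeOf (Trm.app c ts) := by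
  have := List.sizeOf_lt_of_mem h
  simp only [Trm.app.sizeOf_spec]
  omega

variable [DecidableEq V] {R : CS → CS → D} {lam : D}

theorem Trm.le_ext_var_right_iff (hlam : lam ≠ ⊥) {a : Trm V CS} {X : V} :
    lam ≤ Trm.ext R a (.var X) ↔ a = .var X := by
  cases a <;> simp [Trm.ext, apply_ite, hlam]

theorem Trm.le_ext_var_left_iff (hlam : lam ≠ ⊥) {b : Trm V CS} {X : V} :
    lam ≤ Trm.ext R (.var X) b ↔ b = .var X := by
  cases b <;> simp [Trm.ext, apply_ite, hlam, eq_comm]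

theorem Trm.le_ext_app_app_iff (hlam : lam ≠ ⊥) {c c' : CS} {ts ss : List (Trm V CS)} :
    lam ≤ Trm.ext R (.app c ts) (.app c' ss) ↔
      lam ≤ R c c' ∧ Forall₂ (fun t s => lam ≤ Trm.ext R t s) ts ss := by
  rw [Trm.ext, forall₂_iff_zip]
  split_ifs with hlen
  · simp only [le_inf_iff, List.le_foldr_inf_map_iff, Subtype.forall, List.mem_attach,
      true_imp_iff, Prod.forall, hlen, true_and]
  · simp [hlam, hlen]

theorem Trm.le_ext_app_app {c c' : CS} {ts ss : List (Trm V CS)} (hR : lam ≤ R c c')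
    (h : Forall₂ (fun t s => lam ≤ Trm.ext R t s) ts ss) :
    lam ≤ Trm.ext R (.app c ts) (.app c' ss) := by
  obtain rfl | hlam := eq_or_ne lam ⊥
  · exact bot_le
  · exact (Trm.le_ext_app_app_iff hlam).2 ⟨hR, h⟩

end Terms

section Entailment

variable [DecidableEq V] {pI : PP → List (Trm Empty CS) → Prop}
  {Pi : Set (Constr V CS PP)} {t s r : Trm V CS}

theorem entails_eq_iff :
    Entails pI Pi (.eq t s) ↔ ∀ η ∈ Sol pI Pi, t.applyVal η = s.applyVal η := by
  simp [Entails, Constr.sat]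

theorem Entails.of_sol_eq_empty (h : Sol pI Pi = ∅) (c : Constr V CS PP) : Entails pI Pi c := by
  simp [Entails, h]

theorem Entails.eq_refl (t : Trm V CS) : Entails pI Pi (.eq t t) :=
  entails_eq_iff.2 fun _ _ => rfl

theorem Entails.eq_symm (h : Entails pI Pi (.eq t s)) : Entails pI Pi (.eq s t) :=
  entails_eq_iff.2 fun η hη => (entails_eq_iff.1 h η hη).symm

theorem Entails.eq_trans (h : Entails pI Pi (.eq t s)) (h' : Entails pI Pi (.eq s r)) :
    Entails pI Pi (.eq t r) :=
  entails_eq_iff.2 fun η hη => (entails_eq_iff.1 h η hη).trans (entails_eq_iff.1 h' η hη)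

theorem Entails.eq_app {c : CS} {ts ss : List (Trm V CS)}
    (h : Forall₂ (fun t s => Entails pI Pi (.eq t s)) ts ss) :
    Entails pI Pi (.eq (.app c ts) (.app c ss)) :=
  entails_eq_iff.2 fun η hη => (Trm.applyVal_app_eq_applyVal_app_iff η).2
    ⟨rfl, h.imp fun _ _ hts => entails_eq_iff.1 hts η hη⟩

theorem Entails.of_eq_app (hPi : (Sol pI Pi).Nonempty) {c c' : CS} {ts ss : List (Trm V CS)}
    (h : Entails pI Pi (.eq (.app c ts) (.app c' ss))) :
    c = c' ∧ Forall₂ (fun t s => Entails pI Pi (.eq t s)) ts ss := by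
  have hη : ∀ η ∈ Sol pI Pi, c = c' ∧ Forall₂ (fun t s => t.applyVal η = s.applyVal η) ts ss :=
    fun η hη => (Trm.applyVal_app_eq_applyVal_app_iff η).1 (entails_eq_iff.1 h η hη)
  obtain ⟨η₀, hη₀⟩ := hPi
  refine ⟨(hη η₀ hη₀).1, forall₂_iff_zip.2 ⟨(hη η₀ hη₀).2.length_eq, fun hp => ?_⟩⟩
  exact entails_eq_iff.2 fun η hη' => forall₂_zip (hη η hη').2 hp

end Entailment

section TermClose

variable [DecidableEq V] {R : CS → CS → D} {pI : PP → List (Trm Empty CS) → Prop} {lam : D}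
  {Pi : Set (Constr V CS PP)}

theorem TermClose.app {c c' : CS} {ts ss : List (Trm V CS)}
    (hR : lam ≤ R c c') (h : Forall₂ (TermClose R pI lam Pi) ts ss) :
    TermClose R pI lam Pi (.app c ts) (.app c' ss) := by
  obtain ⟨ts', ss', hts, hss, hclose⟩ : ∃ ts' ss' : List (Trm V CS),
      Forall₂ (fun t t' => Entails pI Pi (.eq t t')) ts ts' ∧
      Forall₂ (fun s s' => Entails pI Pi (.eq s s')) ss ss' ∧
      Forall₂ (fun t s => lam ≤ Trm.ext R t s) ts' ss' := by
    induction h with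
    | nil => exact ⟨[], [], .nil, .nil, .nil⟩
    | cons hd _ ih =>
      obtain ⟨t', s', ht, hs, hts⟩ := hd
      obtain ⟨ts', ss', hts', hss', hclose⟩ := ih
      exact ⟨t' :: ts', s' :: ss', .cons ht hts', .cons hs hss', .cons hts hclose⟩
  exact ⟨.app c ts', .app c' ss', Entails.eq_app hts, Entails.eq_app hss,
    Trm.le_ext_app_app hR hclose⟩

theorem termClose_of_le_ext_of_entails (h_trans : ∀ c c' c'', R c c' ⊓ R c' c'' ≤ R c c'')
    (hlam : lam ≠ ⊥) (hPi : (Sol pI Pi).Nonempty) (u : Trm V CS) {a u' b : Trm V CS}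
    (ha : lam ≤ Trm.ext R a u) (hu : Entails pI Pi (.eq u u')) (hb : lam ≤ Trm.ext R u' b) :
    TermClose R pI lam Pi a b := by
  cases u with
  | var X =>
    rw [Trm.le_ext_var_right_iff hlam] at ha
    exact ⟨u', b, ha ▸ hu, .eq_refl b, hb⟩
  | app c ts =>
    cases u' with
    | var Y =>
      rw [Trm.le_ext_var_left_iff hlam] at hb
      exact ⟨a, .app c ts, .eq_refl a, hb ▸ hu.eq_symm, ha⟩
    | app c' ss =>
      obtain ⟨rfl, hts⟩ := Entails.of_eq_app hPi hu
      obtain X | ⟨ca, as⟩ := a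
      · cases (Trm.le_ext_var_left_iff hlam).1 ha
      obtain Y | ⟨cb, bs⟩ := b
      · cases (Trm.le_ext_var_right_iff hlam).1 hb
      obtain ⟨hRa, has⟩ := (Trm.le_ext_app_app_iff hlam).1 ha
      obtain ⟨hRb, hbs⟩ := (Trm.le_ext_app_app_iff hlam).1 hb
      refine TermClose.app ((le_inf hRa hRb).trans (h_trans ca c cb)) ?_
      exact has.trans₃ hts hbs fun t ht _ _ _ =>
        termClose_of_le_ext_of_entails h_trans hlam hPi t
termination_by u
decreasing_by
  subst_vars
  exact Trm.sizeOf_lt_of_mem ht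

end TermClose

theorem term_proximity_of_similarity_trans_general [DecidableEq V] {arC : CS → ℕ} {arD : DP → ℕ}
    (Rl : ProximityRel D arC arD)
    (h_dc_trans : ∀ c c' c'', Rl.dc c c' ⊓ Rl.dc c' c'' ≤ Rl.dc c c'')
    (pI : PP → List (Trm Empty CS) → Prop)
    (lam : D) (hlam : lam ≠ ⊥) (Pi : Set (Constr V CS PP)) :
    ∀ t s r : Trm V CS, TermClose Rl.dc pI lam Pi t s → TermClose Rl.dc pI lam Pi s r →
      TermClose Rl.dc pI lam Pi t r := by
  rintro t s r ⟨th, sh, ht, hs, hts⟩ ⟨sh', rh, hs', hr, hsr⟩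
  obtain hPi | hPi := (Sol pI Pi).eq_empty_or_nonempty
  · exact ⟨th, sh, ht, .of_sol_eq_empty hPi _, hts⟩
  obtain ⟨th', rh', hth', hrh', hclose⟩ :=
    termClose_of_le_ext_of_entails h_dc_trans hlam hPi sh hts (hs.eq_symm.eq_trans hs') hsr
  exact ⟨th', rh', ht.eq_trans hth', hr.eq_trans hrh', hclose⟩

/-- Let `⟨ℛ, Q, C⟩` be an admissible triple in which `ℛ` is a `Q`-valued
similarity relation (i.e. it is moreover transitive on symbols).  Then for every
`λ ∈ D ∖ {⊥}` and every set `Π` of `C`-constraints, the constraint-based term proximity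
relation `≈_{λ,Π}` is transitive on the set of terms. -/
theorem term_proximity_of_similarity_trans [DecidableEq V] {arC : CS → ℕ} {arD : DP → ℕ}
    (Q : QualificationDomain D) (Rl : ProximityRel D arC arD)
    (h_dc_trans : ∀ c c' c'', Rl.dc c c' ⊓ Rl.dc c' c'' ≤ Rl.dc c c'')
    (h_dp_trans : ∀ r r' r'', Rl.dp r r' ⊓ Rl.dp r' r'' ≤ Rl.dp r r'')
    (pI : PP → List (Trm Empty CS) → Prop)
    (lam : D) (hlam : lam ≠ ⊥) (Pi : Set (Constr V CS PP)) :
    ∀ t s r : Trm V CS, TermClose Rl.dc pI lam Pi t s → TermClose Rl.dc pI lam Pi s r →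
      TermClose Rl.dc pI lam Pi t r :=
  term_proximity_of_similarity_trans_general Rl h_dc_trans pI lam hlam Pi
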